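/- Let U be a unitary operator on a separable Hilbert space with cyclic unit vector φ, spectral measure μ, and Carathéodory function F(z) = ∫ (e^{iθ}+z)/(e^{iθ}−z) dμ(θ) = (1+zg(z))/(1−zg(z)) defining the Schur function g. Then the singular part of μ is supported on the set of z ∈ ∂𝔻 for which lim_{r↑1} rz·g(rz) = 1. -/

import Mathlib

/-!
For `‖w‖ = 1` the real part of `(w + ζ) / (w - ζ)` is the Poisson kernel
`(1 - ‖ζ‖²) / ‖w - ζ‖²`; for `ζ = r z` it is at least `1 / (4 (1 - r))` on the arc of radius
`1 - r` about `z`, so `Re F(r z) ≥ μ(arc) / (4 (1 - r))`. At almost every point for the singular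
part `μ_s`, `μ_s(arc) / length → ∞` (Besicovitch differentiation against Lebesgue measure,
transported to `ℝ` by the argument), hence `Re F(r z) → ∞` as `r ↑ 1`. Finally
`‖1 - u‖ * Re ((1 + u) / (1 - u)) ≤ 2` for `‖u‖ ≤ 1`, which forces `r z g(r z) → 1`.
-/

open MeasureTheory Filter

noncomputable instance : MeasurableSpace Circle := borel Circle
instance : BorelSpace Circle := ⟨rfl⟩

/-- `μ` is the spectral measure on the unit circle of `φ` for the unitary `U`. -/
def SpecMeasOfU {H : Type*} [NormedAddCommGroup H] [InnerProductSpace ℂ H] [CompleteSpace H]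
    (U : H →L[ℂ] H) (φ : H) (μ : Measure Circle) : Prop :=
  IsFiniteMeasure μ ∧ ∀ n : ℕ, (inner ℂ φ ((U ^ n) φ) : ℂ) = ∫ z : Circle, (z : ℂ) ^ n ∂μ

open Metric Set
open scoped ENNReal Topology Real

lemma ENNReal.tendsto_toReal_atTop_of_tendsto_top {α : Type*} {l : Filter α} {f : α → ℝ≥0∞}
    (hf : ∀ᶠ a in l, f a ≠ ∞) (h : Tendsto f l (𝓝 ∞)) :
    Tendsto (fun a => (f a).toReal) l atTop := by
  refine tendsto_atTop.2 fun b => ?_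
  filter_upwards [hf, ENNReal.tendsto_nhds_top_iff_nnreal.1 h b.toNNReal] with a hfa ha
  calc b ≤ b.toNNReal := Real.le_coe_toNNReal b
    _ ≤ (f a).toReal := by
      rw [← ENNReal.coe_toNNReal hfa] at ha
      exact_mod_cast ha.le

lemma Real.ae_tendsto_measureReal_closedBall_div_atTop (τ : Measure ℝ) [IsLocallyFiniteMeasure τ]
    (h : volume ⟂ₘ τ) :
    ∀ᵐ x ∂τ, Tendsto (fun δ => τ.real (closedBall x δ) / δ) (𝓝[>] 0) atTop := by
  filter_upwards [Besicovitch.ae_tendsto_rnDeriv volume τ, (Measure.rnDeriv_eq_zero _ _).2 h]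
    with x hx hx0
  rw [hx0, Pi.zero_apply] at hx
  have hinv := hx.inv
  rw [ENNReal.inv_zero] at hinv
  have hpos : ∀ᶠ δ in 𝓝[>] (0 : ℝ), 0 < δ := self_mem_nhdsWithin
  have hratio : Tendsto (fun δ => τ (closedBall x δ) / ENNReal.ofReal (2 * δ)) (𝓝[>] 0) (𝓝 ∞) := by
    refine hinv.congr' ?_
    filter_upwards [hpos] with δ hδ
    rw [Real.volume_closedBall, ENNReal.inv_div (.inr ENNReal.ofReal_ne_top)
      (.inr (ENNReal.ofReal_pos.2 (by positivity)).ne')]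
  have hfin : ∀ᶠ δ in 𝓝[>] (0 : ℝ), τ (closedBall x δ) / ENNReal.ofReal (2 * δ) ≠ ∞ := by
    filter_upwards [hpos] with δ hδ
    exact ENNReal.div_ne_top measure_closedBall_lt_top.ne (ENNReal.ofReal_pos.2 (by positivity)).ne'
  refine ((ENNReal.tendsto_toReal_atTop_of_tendsto_top hfin hratio).const_mul_atTop
    two_pos).congr' ?_
  filter_upwards [hpos] with δ hδ
  rw [ENNReal.toReal_div, ENNReal.toReal_ofReal (by positivity), measureReal_def]
  field_simp

namespace Complex

-- Also true for `w = ζ`: both sides are then `0`, by `x / 0 = 0`.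
lemma re_add_div_sub_eq {w : ℂ} (hw : ‖w‖ = 1) (ζ : ℂ) :
    ((w + ζ) / (w - ζ)).re = (1 - ‖ζ‖ ^ 2) / ‖w - ζ‖ ^ 2 := by
  have hw' : normSq w = 1 := by rw [normSq_eq_norm_sq, hw, one_pow]
  rw [div_re, ← add_div, ← normSq_eq_norm_sq, ← normSq_eq_norm_sq]
  congr 1
  simp only [add_re, add_im, sub_re, sub_im, normSq_apply] at *
  linear_combination hw'

lemma re_add_div_sub_nonneg {w ζ : ℂ} (hw : ‖w‖ = 1) (hζ : ‖ζ‖ ≤ 1) :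
    0 ≤ ((w + ζ) / (w - ζ)).re := by
  rw [re_add_div_sub_eq hw]
  have : ‖ζ‖ ^ 2 ≤ 1 := pow_le_one₀ (norm_nonneg ζ) hζ
  exact div_nonneg (by linarith) (by positivity)

lemma one_div_le_re_add_div_sub {w z : ℂ} {r : ℝ} (hw : ‖w‖ = 1) (hz : ‖z‖ = 1) (hr0 : 0 ≤ r)
    (hr1 : r < 1) (hwz : ‖w - z‖ ≤ 1 - r) :
    1 / (4 * (1 - r)) ≤ ((w + r * z) / (w - r * z)).re := by
  have hrz : ‖(r : ℂ) * z‖ = r := by simp [hz, abs_of_nonneg hr0]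
  have hzrz : ‖z - r * z‖ = 1 - r := by
    rw [← one_sub_mul, norm_mul, hz, mul_one, ← ofReal_one, ← ofReal_sub, norm_real,
      Real.norm_of_nonneg (by linarith)]
  have hupper : ‖w - r * z‖ ≤ 2 * (1 - r) := by
    linarith [norm_sub_le_norm_sub_add_norm_sub w z (r * z)]
  have hlower : 0 < ‖w - r * z‖ := by
    linarith [norm_sub_norm_le w (r * z)]
  rw [re_add_div_sub_eq hw, hrz, div_le_div_iff₀ (by linarith) (by positivity)]
  nlinarith [pow_le_pow_left₀ hlower.le hupper 2]

lemma norm_one_sub_mul_re_le_two {u : ℂ} (hu : ‖u‖ ≤ 1) :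
    ‖1 - u‖ * ((1 + u) / (1 - u)).re ≤ 2 := by
  calc ‖1 - u‖ * ((1 + u) / (1 - u)).re
      ≤ ‖1 - u‖ * ‖(1 + u) / (1 - u)‖ := by gcongr; exact re_le_norm _
    _ ≤ ‖1 + u‖ := by
      rw [norm_div]
      rcases eq_or_ne ‖1 - u‖ 0 with h | h
      · simp [h]
      · rw [mul_div_cancel₀ _ h]
    _ ≤ 2 := by linarith [norm_add_le 1 u, norm_one (α := ℂ)]

lemma tendsto_nhds_one_of_tendsto_re_atTop {α : Type*} {l : Filter α} {u : α → ℂ}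
    (hu : ∀ᶠ a in l, ‖u a‖ ≤ 1) (h : Tendsto (fun a => ((1 + u a) / (1 - u a)).re) l atTop) :
    Tendsto u l (𝓝 1) := by
  rw [tendsto_iff_norm_sub_tendsto_zero]
  refine squeeze_zero' (.of_forall fun a => norm_nonneg _) ?_
    ((tendsto_const_nhds (x := (2 : ℝ))).div_atTop h)
  filter_upwards [hu, h.eventually_gt_atTop 0] with a hua hpos
  rw [norm_sub_rev, le_div_iff₀ hpos]
  exact norm_one_sub_mul_re_le_two hua

end Complex

noncomputable def Circle.arg (z : Circle) : ℝ := Complex.arg z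

instance : Fact (0 < 2 * π) := ⟨Real.two_pi_pos⟩

namespace Circle

lemma measurable_arg : Measurable Circle.arg := by
  unfold Circle.arg; fun_prop

lemma measurableEmbedding_arg : MeasurableEmbedding Circle.arg :=
  measurable_arg.measurableEmbedding injective_arg

lemma dist_le_abs_arg_sub (z w : Circle) : dist z w ≤ |z.arg - w.arg| := by
  show dist (z : ℂ) w ≤ |Complex.arg z - Complex.arg w|
  have h := (lipschitzWith_circleMap 0 1).dist_le_mul z.arg w.arg
  simp only [circleMap, zero_add, Complex.ofReal_one, one_mul, ← coe_exp, Circle.arg, exp_arg,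
    Real.dist_eq] at h
  simpa using h

instance isMulLeftInvariant_map_toCircle_volume (T : ℝ) [Fact (0 < T)] :
    (Measure.map AddCircle.toCircle (volume : Measure (AddCircle T))).IsMulLeftInvariant := by
  have hT : T ≠ 0 := (Fact.out : 0 < T).ne'
  have hmeas : Measurable (AddCircle.toCircle : AddCircle T → Circle) :=
    AddCircle.continuous_toCircle.measurable
  refine ⟨fun g => ?_⟩
  set a := (AddCircle.homeomorphCircle hT).symm g
  have hcomp : (g * ·) ∘ AddCircle.toCircle = AddCircle.toCircle ∘ (a + ·) := by
    ext1 x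
    rw [Function.comp_apply, Function.comp_apply, AddCircle.toCircle_add,
      ← AddCircle.homeomorphCircle_apply hT a, Homeomorph.apply_symm_apply]
  rw [Measure.map_map (continuous_const_mul g).measurable hmeas, hcomp,
    ← Measure.map_map hmeas (measurable_const_add a), map_add_left_eq_self]

lemma volume_image_arg_eq_zero {S : Set Circle} (hS : MeasurableSet S)
    (hS0 : Measure.haar S = 0) : volume (Circle.arg '' S) = 0 := by
  have hmeas : Measurable (AddCircle.toCircle : AddCircle (2 * π) → Circle) :=
    AddCircle.continuous_toCircle.measurable
  have hν : Measure.map AddCircle.toCircle (volume : Measure (AddCircle (2 * π))) S = 0 := by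
    rw [Measure.isMulInvariant_eq_smul_of_compactSpace (Measure.map _ _) Measure.haar]
    simp [hS0]
  rw [Measure.map_apply hmeas hS,
    AddCircle.add_projection_respects_measure (2 * π) (-π) (hmeas hS)] at hν
  refine measure_mono_null ?_ hν
  rintro _ ⟨z, hz, rfl⟩
  refine ⟨?_, Complex.neg_pi_lt_arg z,
    show Complex.arg z ≤ -π + 2 * π by linarith [Complex.arg_le_pi z]⟩
  simpa [AddCircle.toCircle_apply_mk, Circle.arg, Real.pi_ne_zero] using hz

lemma mutuallySingular_volume_map_arg {σ : Measure Circle} (h : σ ⟂ₘ Measure.haar) :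
    volume ⟂ₘ σ.map Circle.arg := by
  obtain ⟨s, hs, hσs, hhaar⟩ := h
  have hmeas : MeasurableSet (Circle.arg '' sᶜ) :=
    measurableEmbedding_arg.measurableSet_image.2 hs.compl
  refine ⟨Circle.arg '' sᶜ, hmeas, volume_image_arg_eq_zero hs.compl hhaar, ?_⟩
  rwa [Measure.map_apply measurable_arg hmeas.compl,
    preimage_compl, measurableEmbedding_arg.injective.preimage_image, compl_compl]

lemma ae_tendsto_measureReal_closedBall_div_atTop (σ : Measure Circle) [IsFiniteMeasure σ]
    (h : σ ⟂ₘ Measure.haar) :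
    ∀ᵐ z ∂σ, Tendsto (fun δ => σ.real (closedBall z δ) / δ) (𝓝[>] 0) atTop := by
  have hτ := Real.ae_tendsto_measureReal_closedBall_div_atTop _
    (mutuallySingular_volume_map_arg h)
  filter_upwards [measurableEmbedding_arg.ae_map_iff.1 hτ] with z hz
  refine tendsto_atTop_mono' _ ?_ hz
  filter_upwards [self_mem_nhdsWithin] with δ (hδ : 0 < δ)
  rw [measureReal_def, measureReal_def, Measure.map_apply measurable_arg measurableSet_closedBall]
  gcongr
  · exact measure_ne_top _ _
  exact fun w hw => (dist_le_abs_arg_sub w z).trans hw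

lemma measureReal_closedBall_div_le_re_integral (μ : Measure Circle) [IsFiniteMeasure μ]
    (z : Circle) {r : ℝ} (hr0 : 0 ≤ r) (hr1 : r < 1) :
    μ.real (closedBall z (1 - r)) / (4 * (1 - r)) ≤
      (∫ w : Circle, ((w : ℂ) + r * z) / ((w : ℂ) - r * z) ∂μ).re := by
  have hne : ∀ w : Circle, (w : ℂ) - r * z ≠ 0 := fun w h => by
    have := congrArg norm (sub_eq_zero.1 h)
    simp [norm_coe, abs_of_nonneg hr0] at this
    linarith
  have hint : Integrable (fun w : Circle => ((w : ℂ) + r * z) / ((w : ℂ) - r * z)) μ :=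
    (by fun_prop (disch := exact hne) : Continuous _).integrable_of_hasCompactSupport
      (.of_compactSpace _)
  rw [← RCLike.re_to_complex, ← integral_re hint]
  calc μ.real (closedBall z (1 - r)) / (4 * (1 - r))
      = μ.real (closedBall z (1 - r)) • (1 / (4 * (1 - r))) := by rw [smul_eq_mul]; ring
    _ ≤ ∫ w in closedBall z (1 - r), (((w : ℂ) + r * z) / ((w : ℂ) - r * z)).re ∂μ :=
      setIntegral_ge_of_const_le measurableSet_closedBall (measure_ne_top _ _)
        (fun w hw => Complex.one_div_le_re_add_div_sub (norm_coe w) (norm_coe z) hr0 hr1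
          (by rw [← Complex.dist_eq]; exact mem_closedBall.1 hw))
        hint.re.integrableOn
    _ ≤ ∫ w, (((w : ℂ) + r * z) / ((w : ℂ) - r * z)).re ∂μ :=
      setIntegral_le_integral hint.re (Eventually.of_forall fun w =>
        Complex.re_add_div_sub_nonneg (norm_coe w) (by simp [norm_coe, abs_of_nonneg hr0, hr1.le]))

lemma tendsto_re_integral_atTop_of_tendsto_measureReal_div (μ : Measure Circle) [IsFiniteMeasure μ]
    {z : Circle} (h : Tendsto (fun δ => μ.real (closedBall z δ) / δ) (𝓝[>] 0) atTop) :
    Tendsto (fun r : ℝ => (∫ w : Circle, ((w : ℂ) + r * z) / ((w : ℂ) - r * z) ∂μ).re)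
      (𝓝[<] 1) atTop := by
  have hsub : Tendsto (fun r : ℝ => 1 - r) (𝓝[<] 1) (𝓝[>] 0) := by
    refine tendsto_nhdsWithin_iff.2 ⟨?_, ?_⟩
    · simpa using ((continuous_sub_left (1 : ℝ)).tendsto 1).mono_left nhdsWithin_le_nhds
    · filter_upwards [self_mem_nhdsWithin] with r (hr : r < 1)
      exact sub_pos.2 hr
  refine tendsto_atTop_mono' _ ?_ ((h.comp hsub).atTop_div_const (by norm_num : (0 : ℝ) < 4))
  filter_upwards [Ioo_mem_nhdsLT zero_lt_one] with r hr
  calc μ.real (closedBall z (1 - r)) / (1 - r) / 4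
      = μ.real (closedBall z (1 - r)) / (4 * (1 - r)) := by rw [div_div, mul_comm]
    _ ≤ _ := measureReal_closedBall_div_le_re_integral μ z hr.1.le hr.2

end Circle

theorem singular_part_supported_on_schur_boundary_one_general
    (μ : Measure Circle) [IsProbabilityMeasure μ]
    (g : ℂ → ℂ) (hg : ∀ z : ℂ, ‖z‖ < 1 → ‖g z‖ ≤ 1)
    (hCar : ∀ z : ℂ, ‖z‖ < 1 →
      ∫ w : Circle, ((w : ℂ) + z) / ((w : ℂ) - z) ∂μ = (1 + z * g z) / (1 - z * g z)) :
    (μ.singularPart Measure.haar)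
      {z : Circle | ¬ Tendsto (fun r : ℝ => (r : ℂ) * (z : ℂ) * g ((r : ℂ) * (z : ℂ)))
          (nhdsWithin 1 (Set.Iio 1)) (nhds 1)} = 0 := by
  have hσ := Circle.ae_tendsto_measureReal_closedBall_div_atTop _
    (μ.mutuallySingular_singularPart Measure.haar)
  refine ae_iff.1 (hσ.mono fun z hz => ?_)
  have hμ : Tendsto (fun δ => μ.real (closedBall z δ) / δ) (𝓝[>] 0) atTop := by
    refine tendsto_atTop_mono' _ ?_ hz
    filter_upwards [self_mem_nhdsWithin] with δ (hδ : 0 < δ)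
    gcongr
    exact ENNReal.toReal_mono (measure_ne_top _ _) (μ.singularPart_le _ _)
  have hdisk : ∀ᶠ r : ℝ in 𝓝[<] 1, ‖(r : ℂ) * z‖ < 1 := by
    filter_upwards [Ioo_mem_nhdsLT zero_lt_one] with r hr
    simp [Circle.norm_coe, abs_of_pos hr.1, hr.2]
  refine Complex.tendsto_nhds_one_of_tendsto_re_atTop ?_
    ((Circle.tendsto_re_integral_atTop_of_tendsto_measureReal_div μ hμ).congr' ?_)
  · filter_upwards [hdisk] with r hr
    rw [norm_mul]
    exact mul_le_one₀ hr.le (norm_nonneg _) (hg _ hr)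
  · filter_upwards [hdisk] with r hr
    rw [hCar _ hr]

/-- If `U` is unitary with cyclic unit vector `φ`, spectral measure `μ`, Carathéodory
function `F(z) = ∫ (w+z)/(w−z) dμ(w) = (1+zg(z))/(1−zg(z))` with Schur function `g`, then
the singular part of `μ` (w.r.t. Haar measure) is supported on
`{z ∈ ∂𝔻 : lim_{r↑1} rz·g(rz) = 1}`. -/
theorem singular_part_supported_on_schur_boundary_one
    {H : Type*} [NormedAddCommGroup H] [InnerProductSpace ℂ H] [CompleteSpace H]
    [TopologicalSpace.SeparableSpace H]
    (U : H →L[ℂ] H) (hU : U ∈ unitary (H →L[ℂ] H)) (φ : H) (hφ : ‖φ‖ = 1)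
    (hcyc : (Submodule.span ℂ
      (Set.range (fun n : ℕ => (U ^ n) φ) ∪
        Set.range (fun n : ℕ => ((star U) ^ n) φ))).topologicalClosure = ⊤)
    (μ : Measure Circle) (hμ : SpecMeasOfU U φ μ) [IsProbabilityMeasure μ]
    (g : ℂ → ℂ) (hg : ∀ z : ℂ, ‖z‖ < 1 → ‖g z‖ ≤ 1)
    (hCar : ∀ z : ℂ, ‖z‖ < 1 →
      ∫ w : Circle, ((w : ℂ) + z) / ((w : ℂ) - z) ∂μ = (1 + z * g z) / (1 - z * g z)) :
    (μ.singularPart Measure.haar)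
      {z : Circle | ¬ Tendsto (fun r : ℝ => (r : ℂ) * (z : ℂ) * g ((r : ℂ) * (z : ℂ)))
          (nhdsWithin 1 (Set.Iio 1)) (nhds 1)} = 0 :=
  singular_part_supported_on_schur_boundary_one_general μ g hg hCar
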